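/- Let (X,d_X), (Y,d_Y) be separable metric spaces with both metrics bounded by 1, and assume d_X is an ultrametric. Then for every function f : X → Y the following are equivalent: (i) f is of Baire class 1; (ii) f is the pointwise limit of a sequence of ω-full functions; (iii) f is the pointwise limit of a sequence of Lipschitz functions; (iv) f is the pointwise limit of a sequence of uniformly continuous functions. -/
import Mathlib


open Set Filter Topology Metric

/-- A set is `Fσ` (i.e. `Σ⁰₂`): a countable union of closed sets. -/
def IsFsigma {X : Type*} [TopologicalSpace X] (A : Set X) : Prop :=
  ∃ F : ℕ → Set X, (∀ n, IsClosed (F n)) ∧ A = ⋃ n, F n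

/-- A function is ω-full: it has at most countably many values and, for a single
constant `r > 0`, the preimage of each value is full with constant `r`. -/
def IsOmegaFullFun {X Y : Type*} [MetricSpace X] (f : X → Y) : Prop :=
  (Set.range f).Countable ∧ ∃ r : ℝ, 0 < r ∧
    ∀ y ∈ Set.range f, ∀ x ∈ f ⁻¹' {y}, Metric.ball x r ⊆ f ⁻¹' {y}

namespace BaireUltraAux

variable {X Y : Type*}

/-! ### Shells of an open set -/

/-- The `m`-th closed shell inside a set `U`. -/
def shell [MetricSpace Y] (U : Set Y) (m : ℕ) : Set Y :=
  {y | ∀ w, w ∉ U → 1 / (m + 1 : ℝ) ≤ dist y w}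

lemma shell_closed [MetricSpace Y] (U : Set Y) (m : ℕ) : IsClosed (shell U m) := by
  have h : shell U m = ⋂ w ∈ Uᶜ, {y : Y | 1 / (m + 1 : ℝ) ≤ dist y w} := by
    ext y; simp [shell, Set.mem_iInter]
  rw [h]
  exact isClosed_biInter fun w _ =>
    isClosed_le continuous_const (Continuous.dist continuous_id continuous_const)

lemma shell_subset [MetricSpace Y] (U : Set Y) (m : ℕ) : shell U m ⊆ U := by
  intro y hy
  by_contra h
  have h1 := hy y h
  rw [dist_self] at h1
  have : (0 : ℝ) < 1 / (m + 1 : ℝ) := by positivity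
  linarith

lemma mem_shell [MetricSpace Y] {U : Set Y} {y : Y} {ε : ℝ} (hb : ball y ε ⊆ U)
    {m : ℕ} (hm : 1 / (m + 1 : ℝ) ≤ ε) : y ∈ shell U m := by
  intro w hw
  by_contra hlt
  push_neg at hlt
  exact hw (hb (mem_ball.mpr (by rw [dist_comm]; linarith)))

lemma eq_iUnion_shell [MetricSpace Y] {U : Set Y} (hU : IsOpen U) : U = ⋃ m, shell U m := by
  apply Subset.antisymm
  · intro y hy
    obtain ⟨ε, hε, hb⟩ := Metric.isOpen_iff.mp hU y hy
    obtain ⟨m, hm⟩ := exists_nat_one_div_lt hε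
    exact mem_iUnion.mpr ⟨m, mem_shell hb hm.le⟩
  · exact iUnion_subset fun m => shell_subset U m

lemma isFsigma_of_isOpen [MetricSpace Y] {U : Set Y} (hU : IsOpen U) : IsFsigma U :=
  ⟨shell U, shell_closed U, eq_iUnion_shell hU⟩

/-! ### ω-full basics -/

lemma omegaFull_of_const [MetricSpace X] {g : X → Y} (hc : (Set.range g).Countable)
    {r : ℝ} (hr : 0 < r) (h : ∀ x x', dist x' x < r → g x' = g x) : IsOmegaFullFun g := by
  refine ⟨hc, r, hr, ?_⟩
  rintro y - x hx x' hx'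
  have hgx : g x = y := hx
  have : g x' = g x := h x x' (mem_ball.mp hx')
  simp only [Set.mem_preimage, Set.mem_singleton_iff]
  rw [this, hgx]

lemma omegaFull_const [MetricSpace X] {g : X → Y} (hg : IsOmegaFullFun g) :
    ∃ r : ℝ, 0 < r ∧ ∀ x x', dist x' x < r → g x' = g x := by
  obtain ⟨-, r, hr, hfull⟩ := hg
  refine ⟨r, hr, fun x x' hxx => ?_⟩
  have := hfull (g x) ⟨x, rfl⟩ x rfl (mem_ball.mpr hxx)
  simpa using this

lemma continuous_of_omegaFull [MetricSpace X] [MetricSpace Y] {g : X → Y}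
    (hg : IsOmegaFullFun g) : Continuous g := by
  obtain ⟨r, hr, hconst⟩ := omegaFull_const hg
  rw [Metric.continuous_iff]
  intro b ε hε
  exact ⟨r, hr, fun a ha => by rw [hconst b a ha, dist_self]; exact hε⟩

lemma lipschitz_of_omegaFull [MetricSpace X] [MetricSpace Y]
    (hbY : ∀ y y' : Y, dist y y' ≤ 1) {g : X → Y} (hg : IsOmegaFullFun g) :
    ∃ L : ℝ, 0 < L ∧ ∀ x x' : X, dist (g x) (g x') ≤ L * dist x x' := by
  obtain ⟨r, hr, hconst⟩ := omegaFull_const hg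
  refine ⟨1 / r, by positivity, fun x x' => ?_⟩
  rcases lt_or_ge (dist x' x) r with h | h
  · rw [hconst x x' h, dist_self]
    positivity
  · have h1 : dist (g x) (g x') ≤ 1 := hbY _ _
    have h2 : (1 : ℝ) = (1 / r) * r := by field_simp
    have h3 : (1 / r) * r ≤ (1 / r) * dist x x' := by
      apply mul_le_mul_of_nonneg_left
      · rw [dist_comm]; exact h
      · positivity
    linarith

/-! ### pointwise limits of continuous functions are Baire class 1 -/

lemma baire_of_ptwise [MetricSpace X] [MetricSpace Y] {f : X → Y} {g : ℕ → X → Y}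
    (hg : ∀ n, Continuous (g n)) (hlim : ∀ x, Tendsto (fun n => g n x) atTop (𝓝 (f x))) :
    ∀ U : Set Y, IsOpen U → IsFsigma (f ⁻¹' U) := by
  intro U hU
  classical
  let e : ℕ ≃ ℕ × ℕ := (Denumerable.eqv (ℕ × ℕ)).symm
  let S : ℕ × ℕ → Set X := fun mk => ⋂ n, ⋂ (_ : mk.2 ≤ n), (g n) ⁻¹' (shell U mk.1)
  refine ⟨fun p => S (e p), ?_, ?_⟩
  · intro p
    exact isClosed_iInter fun n => isClosed_iInter fun _ => (shell_closed U _).preimage (hg n)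
  · ext x
    simp only [Set.mem_preimage, Set.mem_iUnion]
    constructor
    · intro hx
      obtain ⟨ε, hε, hb⟩ := Metric.isOpen_iff.mp hU _ hx
      obtain ⟨m, hm⟩ := exists_nat_one_div_lt (show (0:ℝ) < ε / 2 by linarith)
      obtain ⟨k, hk⟩ := (Metric.tendsto_atTop.mp (hlim x)) (1 / (m + 1 : ℝ)) (by positivity)
      refine ⟨e.symm (m, k), ?_⟩
      have he : e (e.symm (m, k)) = (m, k) := e.apply_symm_apply _
      simp only [S, he, Set.mem_iInter]
      intro n hn w hw
      have h1 : ε ≤ dist (f x) w := by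
        by_contra hlt
        push_neg at hlt
        exact hw (hb (mem_ball.mpr (by rw [dist_comm]; exact hlt)))
      have h2 : dist (g n x) (f x) < 1 / (m + 1 : ℝ) := hk n hn
      have h3 : dist (f x) w ≤ dist (f x) (g n x) + dist (g n x) w := dist_triangle _ _ _
      rw [dist_comm (f x) (g n x)] at h3
      linarith
    · rintro ⟨p, hp⟩
      simp only [S, Set.mem_iInter] at hp
      have hf : f x ∈ shell U (e p).1 := by
        apply (shell_closed U _).mem_of_tendsto (hlim x)
        filter_upwards [eventually_ge_atTop (e p).2] with n hn using hp n hn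
      exact shell_subset U _ hf

/-! ### Step 1: countable-valued functions with closed constancy pieces are
eventually-equal pointwise limits of uniformly locally constant functions -/

lemma step1 [MetricSpace X]
    (hultra : ∀ x y z : X, dist x z ≤ max (dist x y) (dist y z))
    (y₀ : Y) (h : X → Y) (F : ℕ → Set X) (c : ℕ → Y)
    (hcl : ∀ s, IsClosed (F s)) (hcov : ∀ x, ∃ s, x ∈ F s)
    (hval : ∀ s, ∀ z ∈ F s, h z = c s) :
    ∃ (g : ℕ → X → Y) (r : ℕ → ℝ), (∀ n, 0 < r n) ∧
      (∀ n, (Set.range (g n)).Countable) ∧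
      (∀ n x x', dist x' x < r n → g n x' = g n x) ∧
      (∀ x, ∀ᶠ n in atTop, g n x = h x) := by
  classical
  set P : ℕ → X → ℕ → Prop := fun n x s => s ≤ n ∧ ∃ z ∈ F s, dist x z < 1 / (n + 1 : ℝ)
    with hPdef
  refine ⟨fun n x => if H : ∃ s, P n x s then c (Nat.find H) else y₀,
    fun n => 1 / (n + 1 : ℝ), fun n => by positivity, ?_, ?_, ?_⟩
  · intro n
    apply Set.Countable.mono ?_ ((Set.countable_range c).insert y₀)
    rintro y ⟨x, rfl⟩
    show (if H : ∃ s, P n x s then c (Nat.find H) else y₀) ∈ insert y₀ (Set.range c)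
    by_cases H : ∃ s, P n x s
    · rw [dif_pos H]; exact Set.mem_insert_of_mem _ ⟨_, rfl⟩
    · rw [dif_neg H]; exact Set.mem_insert _ _
  · intro n x x' hxx
    have hiff : ∀ s, P n x' s ↔ P n x s := by
      intro s
      constructor
      · rintro ⟨hsn, z, hz, hd⟩
        refine ⟨hsn, z, hz, lt_of_le_of_lt (hultra x x' z) (max_lt ?_ hd)⟩
        rw [dist_comm]; exact hxx
      · rintro ⟨hsn, z, hz, hd⟩
        exact ⟨hsn, z, hz, lt_of_le_of_lt (hultra x' x z) (max_lt hxx hd)⟩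
    show (if H : ∃ s, P n x' s then c (Nat.find H) else y₀) =
      (if H : ∃ s, P n x s then c (Nat.find H) else y₀)
    by_cases H : ∃ s, P n x s
    · have H' : ∃ s, P n x' s := H.imp fun s hs => (hiff s).mpr hs
      rw [dif_pos H, dif_pos H']
      have : Nat.find H' = Nat.find H :=
        le_antisymm (Nat.find_le ((hiff _).mpr (Nat.find_spec H)))
          (Nat.find_le ((hiff _).mp (Nat.find_spec H')))
      rw [this]
    · have H' : ¬ ∃ s, P n x' s := fun ⟨s, hs⟩ => H ⟨s, (hiff s).mp hs⟩
      rw [dif_neg H, dif_neg H']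
  · intro x
    set s₀ := Nat.find (hcov x) with hs₀def
    have hx₀ : x ∈ F s₀ := Nat.find_spec (hcov x)
    have hminor : ∀ s, s < s₀ → ∀ᶠ n : ℕ in atTop, ∀ z ∈ F s, ¬ dist x z < 1 / (n + 1 : ℝ) := by
      intro s hs
      have hxs : x ∉ F s := Nat.find_min (hcov x) hs
      obtain ⟨δ, hδ, hb⟩ := Metric.isOpen_iff.mp (hcl s).isOpen_compl x hxs
      have hev : ∀ᶠ n : ℕ in atTop, 1 / (n + 1 : ℝ) < δ :=
        tendsto_one_div_add_atTop_nhds_zero_nat.eventually (gt_mem_nhds hδ)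
      filter_upwards [hev] with n hn z hz hdz
      exact (hb (mem_ball.mpr (by rw [dist_comm]; linarith))) hz
    have hall : ∀ᶠ n : ℕ in atTop,
        ∀ s ∈ Finset.range s₀, ∀ z ∈ F s, ¬ dist x z < 1 / (n + 1 : ℝ) :=
      (eventually_all_finset _).mpr fun s hs => hminor s (Finset.mem_range.mp hs)
    filter_upwards [hall, eventually_ge_atTop s₀] with n hn hns
    show (if H : ∃ s, P n x s then c (Nat.find H) else y₀) = h x
    have H : ∃ s, P n x s := ⟨s₀, hns, x, hx₀, by rw [dist_self]; positivity⟩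
    rw [dif_pos H]
    have hfind : Nat.find H = s₀ := by
      rw [Nat.find_eq_iff]
      refine ⟨⟨hns, x, hx₀, by rw [dist_self]; positivity⟩, fun s hs => ?_⟩
      rintro ⟨-, z, hz, hdz⟩
      exact hn s (Finset.mem_range.mpr hs) z hz hdz
    rw [hfind]
    exact (hval s₀ x hx₀).symm

/-! ### Step B: countable-valued approximations of a Baire class 1 function -/

lemma stepB [MetricSpace X] [MetricSpace Y] [Nonempty Y] [TopologicalSpace.SeparableSpace Y]
    (f : X → Y) (hB : ∀ U : Set Y, IsOpen U → IsFsigma (f ⁻¹' U)) {ε : ℝ} (hε : 0 < ε) :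
    ∃ (h : X → Y) (F : ℕ → Set X) (c : ℕ → Y),
      (∀ x, dist (h x) (f x) < ε) ∧ (∀ s, IsClosed (F s)) ∧ (∀ x, ∃ s, x ∈ F s) ∧
      (∀ s, ∀ z ∈ F s, h z = c s) := by
  classical
  set y : ℕ → Y := TopologicalSpace.denseSeq Y with hydef
  have hy : DenseRange y := TopologicalSpace.denseRange_denseSeq Y
  have hmem : ∀ k : ℕ, IsFsigma (f ⁻¹' ball (y k) ε) := fun k => hB _ isOpen_ball
  choose C hCcl hCeq using hmem
  set e : ℕ ≃ ℕ × ℕ := (Denumerable.eqv (ℕ × ℕ)).symm with hedef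
  set Cp : ℕ → Set X := fun p => C (e p).1 (e p).2 with hCpdef
  have hCpcl : ∀ p, IsClosed (Cp p) := fun p => hCcl _ _
  have hcov : ∀ x, ∃ p, x ∈ Cp p := by
    intro x
    obtain ⟨k, hk⟩ := hy.exists_dist_lt (f x) hε
    have hx : x ∈ ⋃ n, C k n := by
      rw [← hCeq k]
      exact Set.mem_preimage.mpr (mem_ball.mpr hk)
    obtain ⟨j, hj⟩ := mem_iUnion.mp hx
    refine ⟨e.symm (k, j), ?_⟩
    show x ∈ C (e (e.symm (k, j))).1 (e (e.symm (k, j))).2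
    rw [e.apply_symm_apply]
    exact hj
  set h : X → Y := fun x => y (e (Nat.find (hcov x))).1 with hhdef
  have hdist : ∀ x, dist (h x) (f x) < ε := by
    intro x
    have hx : x ∈ Cp (Nat.find (hcov x)) := Nat.find_spec (hcov x)
    have hx2 : x ∈ ⋃ n, C (e (Nat.find (hcov x))).1 n :=
      mem_iUnion.mpr ⟨(e (Nat.find (hcov x))).2, hx⟩
    rw [← hCeq] at hx2
    have := mem_ball.mp (Set.mem_preimage.mp hx2)
    rw [dist_comm] at this
    exact this
  have hO : ∀ p : ℕ, IsFsigma (⋃ q ∈ Finset.range p, Cp q)ᶜ := by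
    intro p
    apply isFsigma_of_isOpen
    exact (Set.Finite.isClosed_biUnion (Finset.range p).finite_toSet
      (fun q _ => hCpcl q)).isOpen_compl
  choose K hKcl hKeq using hO
  refine ⟨h, fun s => Cp (e s).1 ∩ K (e s).1 (e s).2, fun s => y (e (e s).1).1, hdist, ?_, ?_, ?_⟩
  · exact fun s => (hCpcl _).inter (hKcl _ _)
  · intro x
    set p := Nat.find (hcov x) with hpdef
    have hx : x ∈ Cp p := Nat.find_spec (hcov x)
    have hxO : x ∈ (⋃ q ∈ Finset.range p, Cp q)ᶜ := by
      simp only [Set.mem_compl_iff, Set.mem_iUnion, not_exists]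
      intro q hq
      exact Nat.find_min (hcov x) (Finset.mem_range.mp hq)
    rw [hKeq p] at hxO
    obtain ⟨i, hi⟩ := mem_iUnion.mp hxO
    refine ⟨e.symm (p, i), ?_⟩
    show x ∈ Cp (e (e.symm (p, i))).1 ∩ K (e (e.symm (p, i))).1 (e (e.symm (p, i))).2
    rw [e.apply_symm_apply]
    exact ⟨hx, hi⟩
  · rintro s z ⟨hz1, hz2⟩
    have hzO : z ∈ (⋃ q ∈ Finset.range (e s).1, Cp q)ᶜ := by
      rw [hKeq]
      exact mem_iUnion.mpr ⟨(e s).2, hz2⟩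
    simp only [Set.mem_compl_iff, Set.mem_iUnion, not_exists] at hzO
    have hfind : Nat.find (hcov z) = (e s).1 := by
      rw [Nat.find_eq_iff]
      exact ⟨hz1, fun q hq => hzO q (Finset.mem_range.mpr hq)⟩
    show y (e (Nat.find (hcov z))).1 = y (e (e s).1).1
    rw [hfind]

/-! ### The truncated combination sequence -/

noncomputable def comboSeq [MetricSpace Y] (v : ℕ → Y) : ℕ → Y
  | 0 => v 0
  | m + 1 => if dist (v (m + 1)) (comboSeq v m) ≤ 3 * (1/2 : ℝ) ^ (m + 1) then v (m + 1)
      else comboSeq v m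

lemma comboSeq_dist_succ [MetricSpace Y] (v : ℕ → Y) (m : ℕ) :
    dist (comboSeq v (m + 1)) (comboSeq v m) ≤ 3 * (1/2 : ℝ) ^ (m + 1) := by
  rw [comboSeq]
  split_ifs with hc
  · exact hc
  · rw [dist_self]; positivity

lemma comboSeq_dist_le [MetricSpace Y] (v : ℕ → Y) (M : ℕ) :
    ∀ m, M ≤ m → dist (comboSeq v m) (comboSeq v M) ≤ 3 * ((1/2 : ℝ) ^ M - (1/2 : ℝ) ^ m) := by
  intro m hm
  induction m with
  | zero =>
    have : M = 0 := Nat.le_zero.mp hm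
    subst this
    simp
  | succ m ih =>
    rcases Nat.lt_or_ge M (m + 1) with hlt | hge
    · have hMm : M ≤ m := Nat.lt_succ_iff.mp hlt
      have h1 := comboSeq_dist_succ v m
      have h2 := ih hMm
      have h3 : dist (comboSeq v (m + 1)) (comboSeq v M) ≤
          dist (comboSeq v (m + 1)) (comboSeq v m) + dist (comboSeq v m) (comboSeq v M) :=
        dist_triangle _ _ _
      have harith : 3 * (1/2 : ℝ) ^ (m + 1) + 3 * ((1/2 : ℝ) ^ M - (1/2 : ℝ) ^ m) =
          3 * ((1/2 : ℝ) ^ M - (1/2 : ℝ) ^ (m + 1)) := by ring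
      linarith
    · have : M = m + 1 := le_antisymm hm hge
      subst this
      simp

lemma comboSeq_congr [MetricSpace Y] (v v' : ℕ → Y) :
    ∀ m, (∀ i ≤ m, v i = v' i) → comboSeq v m = comboSeq v' m := by
  intro m
  induction m with
  | zero => intro h; rw [comboSeq, comboSeq]; exact h 0 le_rfl
  | succ m ih =>
    intro h
    have hih := ih fun i hi => h i (Nat.le_succ_of_le hi)
    rw [comboSeq, comboSeq, hih, h (m + 1) le_rfl]

lemma comboSeq_mem [MetricSpace Y] (v : ℕ → Y) : ∀ m, ∃ i, i ≤ m ∧ comboSeq v m = v i := by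
  intro m
  induction m with
  | zero => exact ⟨0, le_rfl, rfl⟩
  | succ m ih =>
    rw [comboSeq]
    split_ifs with hc
    · exact ⟨m + 1, le_rfl, rfl⟩
    · obtain ⟨i, hi, hieq⟩ := ih
      exact ⟨i, Nat.le_succ_of_le hi, hieq⟩

lemma comboSeq_eq_of [MetricSpace Y] (w : ℕ → Y)
    (hw : ∀ i, dist (w (i + 1)) (w i) ≤ 3 * (1/2 : ℝ) ^ (i + 1)) (v : ℕ → Y) :
    ∀ M, (∀ i ≤ M, v i = w i) → comboSeq v M = w M := by
  intro M
  induction M with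
  | zero => intro h; rw [comboSeq]; exact h 0 le_rfl
  | succ M ih =>
    intro h
    have hih := ih fun i hi => h i (Nat.le_succ_of_le hi)
    rw [comboSeq, hih, h (M + 1) le_rfl]
    rw [if_pos (hw M)]

/-! ### The hard direction -/

lemma hard [MetricSpace X] [MetricSpace Y] [TopologicalSpace.SeparableSpace Y]
    (hultra : ∀ x y z : X, dist x z ≤ max (dist x y) (dist y z)) (f : X → Y)
    (hB : ∀ U : Set Y, IsOpen U → IsFsigma (f ⁻¹' U)) :
    ∃ g : ℕ → X → Y, (∀ n, IsOmegaFullFun (g n)) ∧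
      ∀ x, Tendsto (fun n => g n x) atTop (𝓝 (f x)) := by
  classical
  rcases isEmpty_or_nonempty X with hX | hX
  · refine ⟨fun _ => f, fun n => ⟨?_, 1, one_pos, ?_⟩, fun x => (hX.false x).elim⟩
    · rw [Set.range_eq_empty f]; exact Set.countable_empty
    · intro y hy
      rw [Set.range_eq_empty f] at hy
      exact absurd hy (Set.notMem_empty y)
  haveI : Nonempty Y := ⟨f (Classical.arbitrary X)⟩
  have hstep : ∀ m : ℕ, ∃ (h : X → Y) (F : ℕ → Set X) (c : ℕ → Y),
      (∀ x, dist (h x) (f x) < (1/2 : ℝ) ^ m) ∧ (∀ s, IsClosed (F s)) ∧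
      (∀ x, ∃ s, x ∈ F s) ∧ (∀ s, ∀ z ∈ F s, h z = c s) :=
    fun m => stepB f hB (by positivity)
  choose h F c hdist hcl hcov hval using hstep
  have hstep1 := fun m =>
    step1 hultra (Classical.arbitrary Y) (h m) (F m) (c m) (hcl m) (hcov m) (hval m)
  choose g r hrpos hcnt hlc hev using hstep1
  refine ⟨fun n x => comboSeq (fun m => g m n x) n, ?_, ?_⟩
  · intro n
    have hsub : Set.range (fun x => comboSeq (fun m => g m n x) n) ⊆
        ⋃ m, Set.range (g m n) := by
      rintro y ⟨x, rfl⟩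
      obtain ⟨i, hi, hieq⟩ := comboSeq_mem (fun m => g m n x) n
      exact mem_iUnion.mpr ⟨i, x, hieq.symm⟩
    have hcount := Set.Countable.mono hsub (Set.countable_iUnion fun m => hcnt m n)
    obtain ⟨ρ, hρ, hρle⟩ : ∃ ρ : ℝ, 0 < ρ ∧ ∀ m ≤ n, ρ ≤ r m n := by
      have hne : (Finset.range (n + 1)).Nonempty := ⟨0, Finset.mem_range.mpr n.succ_pos⟩
      refine ⟨(Finset.range (n + 1)).inf' hne (fun m => r m n), ?_, ?_⟩
      · rw [Finset.lt_inf'_iff]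
        exact fun m _ => hrpos m n
      · intro m hm
        exact Finset.inf'_le _ (Finset.mem_range.mpr (Nat.lt_succ_of_le hm))
    apply omegaFull_of_const hcount hρ
    intro x x' hxx
    apply comboSeq_congr
    intro i hi
    exact hlc i n x x' (lt_of_lt_of_le hxx (hρle i hi))
  · intro x
    rw [Metric.tendsto_atTop]
    intro ε hε
    obtain ⟨M, hM⟩ := exists_pow_lt_of_lt_one (show (0:ℝ) < ε / 4 by linarith)
      (show (1/2 : ℝ) < 1 by norm_num)
    have hevall : ∀ᶠ n : ℕ in atTop, ∀ m ∈ Finset.range (M + 1), g m n x = h m x :=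
      (eventually_all_finset _).mpr fun m _ => hev m x
    obtain ⟨N, hN⟩ := Filter.eventually_atTop.mp (hevall.and (eventually_ge_atTop M))
    refine ⟨N, fun n hn => ?_⟩
    obtain ⟨hagree, hMn⟩ := hN n hn
    have hw : ∀ i, dist (h (i + 1) x) (h i x) ≤ 3 * (1/2 : ℝ) ^ (i + 1) := by
      intro i
      have h1 := hdist (i + 1) x
      have h2 := hdist i x
      have h3 : dist (h (i + 1) x) (h i x) ≤ dist (h (i + 1) x) (f x) + dist (f x) (h i x) :=
        dist_triangle _ _ _
      rw [dist_comm (f x)] at h3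
      have harith : (1/2 : ℝ) ^ (i + 1) + (1/2 : ℝ) ^ i = 3 * (1/2 : ℝ) ^ (i + 1) := by ring
      linarith
    have hcombM : comboSeq (fun m => g m n x) M = h M x :=
      comboSeq_eq_of (fun i => h i x) hw _ M
        (fun i hi => hagree i (Finset.mem_range.mpr (Nat.lt_succ_of_le hi)))
    have hd1 := comboSeq_dist_le (fun m => g m n x) M n hMn
    have hd2 : dist (comboSeq (fun m => g m n x) n) (f x) ≤
        dist (comboSeq (fun m => g m n x) n) (comboSeq (fun m => g m n x) M) +
          dist (comboSeq (fun m => g m n x) M) (f x) := dist_triangle _ _ _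
    rw [hcombM] at hd1
    rw [hcombM] at hd2
    have h4 := hdist M x
    have h5 : (0:ℝ) ≤ (1/2 : ℝ) ^ n := by positivity
    show dist (comboSeq (fun m => g m n x) n) (f x) < ε
    linarith

end BaireUltraAux

open BaireUltraAux in
theorem baire_one_iff_omegaFull_iff_lipschitz_iff_unifCont
    {X Y : Type*} [MetricSpace X] [MetricSpace Y]
    [TopologicalSpace.SeparableSpace X] [TopologicalSpace.SeparableSpace Y]
    (hultra : ∀ x y z : X, dist x z ≤ max (dist x y) (dist y z))
    (hbX : ∀ x x' : X, dist x x' ≤ 1) (hbY : ∀ y y' : Y, dist y y' ≤ 1)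
    (f : X → Y) :
    ((∀ U : Set Y, IsOpen U → IsFsigma (f ⁻¹' U)) ↔
      ∃ g : ℕ → X → Y, (∀ n, IsOmegaFullFun (g n)) ∧
        ∀ x, Tendsto (fun n => g n x) atTop (𝓝 (f x))) ∧
    ((∀ U : Set Y, IsOpen U → IsFsigma (f ⁻¹' U)) ↔
      ∃ g : ℕ → X → Y,
        (∀ n, ∃ L : ℝ, 0 < L ∧ ∀ x x' : X, dist (g n x) (g n x') ≤ L * dist x x') ∧
        ∀ x, Tendsto (fun n => g n x) atTop (𝓝 (f x))) ∧
    ((∀ U : Set Y, IsOpen U → IsFsigma (f ⁻¹' U)) ↔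
      ∃ g : ℕ → X → Y, (∀ n, UniformContinuous (g n)) ∧
        ∀ x, Tendsto (fun n => g n x) atTop (𝓝 (f x))) := by
  have hLipCont : ∀ g : X → Y,
      (∃ L : ℝ, 0 < L ∧ ∀ x x' : X, dist (g x) (g x') ≤ L * dist x x') →
      UniformContinuous g := by
    rintro g ⟨L, hL, hLip⟩
    rw [Metric.uniformContinuous_iff]
    intro ε hε
    refine ⟨ε / L, by positivity, fun {a b} hab => ?_⟩
    have h1 := hLip a b
    have h2 : L * dist a b < L * (ε / L) := by
      apply mul_lt_mul_of_pos_left hab hL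
    rw [mul_div_cancel₀ ε (ne_of_gt hL)] at h2
    linarith
  refine ⟨⟨fun hi => hard hultra f hi, ?_⟩, ⟨?_, ?_⟩, ⟨?_, ?_⟩⟩
  · rintro ⟨g, hg, hlim⟩
    exact baire_of_ptwise (fun n => continuous_of_omegaFull (hg n)) hlim
  · intro hi
    obtain ⟨g, hg, hlim⟩ := hard hultra f hi
    exact ⟨g, fun n => lipschitz_of_omegaFull hbY (hg n), hlim⟩
  · rintro ⟨g, hg, hlim⟩
    exact baire_of_ptwise (fun n => (hLipCont (g n) (hg n)).continuous) hlim
  · intro hi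
    obtain ⟨g, hg, hlim⟩ := hard hultra f hi
    exact ⟨g, fun n => hLipCont (g n) (lipschitz_of_omegaFull hbY (hg n)), hlim⟩
  · rintro ⟨g, hg, hlim⟩
    exact baire_of_ptwise (fun n => (hg n).continuous) hlim
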